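/- arXiv:2604.23223 — 2 statements merged into one kernel-verified Lean document; each statement's English description precedes it below -/
import Mathlib

section
/- For all natural numbers n and l with l ≤ n, the sum over i from 0 to l of C(n-i, i) * C(l+i, 2i+1) equals the sum over i from 0 to l of C(n-i, i-1) * C(l+i, 2i), where C denotes the usual binomial coefficient (with C(a, b) = 0 when b < 0 or b > a). -/
/-!
Put `q = X (1 + X)` and let `J` be the Jacobsthal polynomials, `J₀ = 0`, `J₁ = 1`,
`J_{n+2} = J_{n+1} + q J_n`, so that `J_{n+1} = ∑ᵢ C(n-i, i) qⁱ`. The roots of `t² = t + q`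
are `1 + X` and `-X`, whence `J_{n+1} = (1 + X) J_n + (-X)ⁿ`. The coefficient of `Xˡ` in
`Xᵃ (1 + X)^(l+c) qⁱ` is `C(l+c+i, 2i+a+c)`, so the two sides of the identity are the
coefficients of `Xˡ` in `X (1 + X)ˡ J_{n+1}` and in `X (1 + X)^(l+1) J_n`. These polynomials
differ by `(-1)ⁿ X^(n+1) (1 + X)ˡ`, which has no `Xˡ` term when `l ≤ n`.
-/
open Finset

/-- Generalized binomial coefficient: classical for nonnegative upper index,
`(-1)^k * C(k-m-1, k)` for negative upper index, and `0` for negative lower index. -/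
def gchoose (m k : ℤ) : ℤ :=
  if k < 0 then 0
  else if m < 0 then (-1) ^ k.toNat * ((k - m - 1).toNat.choose k.toNat : ℤ)
  else (m.toNat.choose k.toNat : ℤ)

open Polynomial

section Jacobsthal

variable {R : Type*}

def jacobsthal [CommSemiring R] (q : R) : ℕ → R
  | 0 => 0
  | 1 => 1
  | n + 2 => jacobsthal q (n + 1) + q * jacobsthal q n

theorem jacobsthal_succ_eq_sum_antidiagonal [CommSemiring R] (q : R) :
    ∀ n : ℕ, jacobsthal q (n + 1) = ∑ p ∈ antidiagonal n, (p.1.choose p.2 : R) * q ^ p.2 :=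
  Nat.twoStepInduction (by simp [jacobsthal]) (by simp [jacobsthal, Finset.Nat.antidiagonal_succ])
    fun n h1 h2 => by
      rw [jacobsthal, h1, h2, Nat.sum_antidiagonal_succ', Nat.sum_antidiagonal_succ',
        Nat.sum_antidiagonal_succ]
      simp only [Nat.choose_succ_succ, Nat.choose_zero_right, Nat.choose_zero_succ, Nat.cast_add,
        Nat.cast_zero, add_mul, zero_mul, sum_add_distrib, mul_sum, mul_left_comm q, ← pow_succ']
      ring

theorem jacobsthal_eq_sum_range [CommSemiring R] (q : R) (n : ℕ) :
    jacobsthal q n = ∑ i ∈ range n, ((n - 1 - i).choose i : R) * q ^ i := by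
  cases n with
  | zero => rfl
  | succ n =>
    rw [jacobsthal_succ_eq_sum_antidiagonal, ← Nat.sum_antidiagonal_swap]
    simp only [Prod.fst_swap, Prod.snd_swap]
    rw [Nat.sum_antidiagonal_eq_sum_range_succ (fun i j => (j.choose i : R) * q ^ i)]
    simp

theorem jacobsthal_mul_one_add_succ [CommRing R] (x : R) (n : ℕ) :
    jacobsthal (x * (1 + x)) (n + 1) = (1 + x) * jacobsthal (x * (1 + x)) n + (-x) ^ n := by
  induction n with
  | zero => simp [jacobsthal]
  | succ n ih =>
    rw [jacobsthal, pow_succ]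
    linear_combination (-x) * ih

end Jacobsthal

theorem Polynomial.coeff_X_pow_mul_one_add_X_pow_add {R : Type*} [Semiring R] (a c d : ℕ) :
    (X ^ a * (1 + X : R[X]) ^ (d + c)).coeff d = ((d + c).choose (a + c) : R) := by
  rw [coeff_X_pow_mul', coeff_one_add_X_pow]
  split_ifs with h
  · rw [← Nat.choose_symm (by omega)]; congr 2; omega
  · rw [Nat.choose_eq_zero_of_lt (by omega), Nat.cast_zero]

theorem Finset.sum_Icc_zero_natCast_eq_sum_range {M : Type*} [AddCommMonoid M] (f : ℤ → M)
    (l : ℕ) :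
    ∑ i ∈ Icc (0 : ℤ) l, f i = ∑ i ∈ range (l + 1), f i := by
  rw [Int.Icc_eq_finset_map, sum_map]
  simp

theorem Polynomial.coeff_X_pow_mul_one_add_X_pow_add_mul_jacobsthal {R : Type*} [CommSemiring R]
    (a c l n : ℕ) :
    (X ^ a * (1 + X : R[X]) ^ (l + c) * jacobsthal (X * (1 + X)) n).coeff l
      = ∑ i ∈ range n, ((n - 1 - i).choose i * (l + c + i).choose (2 * i + a + c) : R) := by
  rw [jacobsthal_eq_sum_range, mul_sum, finsetSum_coeff]
  refine sum_congr rfl fun i _ => ?_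
  have hterm :
      X ^ a * (1 + X : R[X]) ^ (l + c) * (((n - 1 - i).choose i : R[X]) * (X * (1 + X)) ^ i) =
        ((n - 1 - i).choose i : R[X]) * (X ^ (a + i) * (1 + X) ^ (l + (c + i))) := by
    rw [mul_pow]; ring
  rw [hterm, coeff_natCast_mul, coeff_X_pow_mul_one_add_X_pow_add]
  congr 3 <;> omega

lemma gchoose_natCast (a b : ℕ) : gchoose a b = a.choose b := by
  simp [gchoose, Int.not_lt.2 (Int.natCast_nonneg _)]

lemma gchoose_of_neg (m : ℤ) {k : ℤ} (hk : k < 0) : gchoose m k = 0 := if_pos hk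

theorem sum_choose_mul_choose_eq_of_le {l n : ℕ} (h : l ≤ n) :
    ∑ i ∈ range (n + 1), (n - i).choose i * (l + i).choose (2 * i + 1)
      = ∑ i ∈ range n, (n - 1 - i).choose i * (l + 1 + i).choose (2 * i + 2) := by
  have key : (X * (1 + X) ^ l * jacobsthal (X * (1 + X)) (n + 1) : ℤ[X])
      = X * (1 + X) ^ (l + 1) * jacobsthal (X * (1 + X)) n
        + X ^ (n + 1) * ((-1) ^ n * (1 + X) ^ l) := by
    rw [jacobsthal_mul_one_add_succ]; ring
  have hcoeff := congrArg (coeff · l) key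
  have hodd := coeff_X_pow_mul_one_add_X_pow_add_mul_jacobsthal (R := ℤ) 1 0 l (n + 1)
  have heven := coeff_X_pow_mul_one_add_X_pow_add_mul_jacobsthal (R := ℤ) 1 1 l n
  simp only [pow_one, add_zero] at hodd heven
  simp only [coeff_add, coeff_X_pow_mul', if_neg (by omega : ¬ n + 1 ≤ l), add_zero, hodd, heven]
    at hcoeff
  exact_mod_cast hcoeff

lemma sum_Icc_gchoose_mul_gchoose_odd {l n : ℕ} (h : l ≤ n) :
    ∑ i ∈ Icc (0 : ℤ) l, gchoose ((n : ℤ) - i) i * gchoose ((l : ℤ) + i) (2 * i + 1)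
      = (∑ i ∈ range (n + 1), (n - i).choose i * (l + i).choose (2 * i + 1) : ℕ) := by
  rw [sum_Icc_zero_natCast_eq_sum_range, Nat.cast_sum,
    ← sum_subset (range_subset_range.2 (by omega : l + 1 ≤ n + 1)) fun i _ hi => by
      rw [mem_range] at hi
      rw [Nat.choose_eq_zero_of_lt (by omega : l + i < 2 * i + 1), mul_zero, Nat.cast_zero]]
  refine sum_congr rfl fun i hi => ?_
  rw [mem_range] at hi
  rw [Nat.cast_mul, ← gchoose_natCast, ← gchoose_natCast]
  push_cast [Nat.cast_sub (by omega : i ≤ n)]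
  rfl

lemma sum_Icc_gchoose_mul_gchoose_even {l n : ℕ} (h : l ≤ n) :
    ∑ i ∈ Icc (0 : ℤ) l, gchoose ((n : ℤ) - i) (i - 1) * gchoose ((l : ℤ) + i) (2 * i)
      = (∑ i ∈ range n, (n - 1 - i).choose i * (l + 1 + i).choose (2 * i + 2) : ℕ) := by
  rw [sum_Icc_zero_natCast_eq_sum_range, sum_range_succ', Nat.cast_sum,
    ← sum_subset (range_subset_range.2 h) fun i _ hi => by
      rw [mem_range] at hi
      rw [Nat.choose_eq_zero_of_lt (by omega : l + 1 + i < 2 * i + 2), mul_zero, Nat.cast_zero]]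
  rw [gchoose_of_neg _ (by norm_num), zero_mul, add_zero]
  refine sum_congr rfl fun i hi => ?_
  rw [mem_range] at hi
  rw [Nat.cast_mul, ← gchoose_natCast, ← gchoose_natCast]
  push_cast [Nat.cast_sub (by omega : 1 ≤ n), Nat.cast_sub (by omega : i ≤ n - 1)]
  congr 1 <;> congr 1 <;> ring

theorem stmt_0 (n l : ℕ) (h : l ≤ n) :
    ∑ i ∈ Finset.Icc (0 : ℤ) l, gchoose ((n : ℤ) - i) i * gchoose ((l : ℤ) + i) (2 * i + 1)
      = ∑ i ∈ Finset.Icc (0 : ℤ) l, gchoose ((n : ℤ) - i) (i - 1) * gchoose ((l : ℤ) + i) (2 * i) := by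
  rw [sum_Icc_gchoose_mul_gchoose_odd h, sum_Icc_gchoose_mul_gchoose_even h,
    sum_choose_mul_choose_eq_of_le h]
end

section
/- Define, for an integer n and a positive integer k, v_{k,n} := sum over i from n+1 to n+k of [ -C(n-i, i) * C(n+k+i, 2i+1) + C(n-i, i-1) * C(n+k+i, 2i) ], using generalized binomial coefficients for negative upper indices. Then for all n ≥ 0 and k ≥ 1, v_{k+1, n+1} = v_{k, n+1} - v_{k+1, n}. -/
/-!
Split each binomial coefficient of the summands of `v_{k+1,n+1}` and `v_{k+1,n}` by Pascal's rule
(which holds for the generalized coefficients with no restriction on the indices). Over the common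
range `n + 2 ≤ i ≤ n + k + 1` the combination `v_{k+1,n+1} - v_{k,n+1} + v_{k+1,n}` then becomes the
telescoping sum of `F i - F (i + 1)` with `F i = C(n+1-i, i-1) C(n+k+1+i, 2i-1)`, and the two
boundary terms left over cancel `F (n + 2)` and `F (n + k + 2)`.
-/

open Finset

/-- The double sequence `v_{k,n}`. -/
noncomputable def vseq (k n : ℤ) : ℤ :=
  ∑ i ∈ Finset.Icc (n + 1) (n + k),
    (-(gchoose (n - i) i * gchoose (n + k + i) (2 * i + 1))
      + gchoose (n - i) (i - 1) * gchoose (n + k + i) (2 * i))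

theorem gchoose_succ_left (m k : ℤ) : gchoose (m + 1) k = gchoose m k + gchoose m (k - 1) := by
  unfold gchoose
  rcases lt_trichotomy k 0 with hk | rfl | hk
  · simp [hk, show k - 1 < 0 by omega]
  · split_ifs <;> simp_all
  have hk' : k.toNat = (k - 1).toNat + 1 := by omega
  simp only [show ¬k < 0 by omega, show ¬k - 1 < 0 by omega, if_false, hk']
  rcases lt_trichotomy m (-1) with hm | rfl | hm
  · simp only [show m + 1 < 0 by omega, show m < 0 from by omega, if_true,
      show (k - m - 1).toNat = (k - (m + 1) - 1).toNat + 1 by omega,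
      show (k - 1 - m - 1).toNat = (k - (m + 1) - 1).toNat by omega, Nat.choose_succ_succ]
    push_cast
    ring
  · simp only [show ¬(-1 + 1 : ℤ) < 0 by omega, show (-1 : ℤ) < 0 by omega, if_true, if_false,
      show (k - 1 - -1 - 1).toNat = (k - 1).toNat by omega,
      show (k - -1 - 1).toNat = (k - 1).toNat + 1 by omega]
    simp [pow_succ]
  · simp only [show ¬m + 1 < 0 by omega, show ¬m < 0 by omega, if_false,
      show (m + 1).toNat = m.toNat + 1 by omega, Nat.choose_succ_succ]
    push_cast
    ring

theorem gchoose_self {m : ℤ} (hm : 0 ≤ m) : gchoose m m = 1 := by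
  simp [gchoose, hm.not_gt]

theorem gchoose_eq_zero_of_lt {m k : ℤ} (hm : 0 ≤ m) (h : m < k) : gchoose m k = 0 := by
  rw [gchoose, if_neg (by omega), if_neg (by omega), Nat.choose_eq_zero_of_lt (by omega)]
  rfl

theorem Int.sum_Icc_sub' {M : Type*} [AddCommGroup M] (f : ℤ → M) {a b : ℤ} (h : a ≤ b + 1) :
    ∑ i ∈ Icc a b, (f i - f (i + 1)) = f a - f (b + 1) := by
  induction b, (show a - 1 ≤ b by omega) using Int.leInduction with
  | base => simp
  | succ b hb ih =>
    rw [← insert_Icc_right_eq_Icc_add_one (by omega), sum_insert (by simp), ih (by omega)]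
    abel

def vsummand (n k i : ℤ) : ℤ :=
  -(gchoose (n - i) i * gchoose (n + k + i) (2 * i + 1))
    + gchoose (n - i) (i - 1) * gchoose (n + k + i) (2 * i)

theorem vseq_eq_sum_vsummand (k n : ℤ) :
    vseq k n = ∑ i ∈ Icc (n + 1) (n + k), vsummand n k i := rfl

def vantidiff (n k i : ℤ) : ℤ := gchoose (n + 1 - i) (i - 1) * gchoose (n + k + 1 + i) (2 * i - 1)

theorem vsummand_add_vsummand_sub_vsummand (n k i : ℤ) :
    vsummand (n + 1) (k + 1) i - vsummand (n + 1) k i + vsummand n (k + 1) i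
      = vantidiff n k i - vantidiff n k (i + 1) := by
  have h₁ := gchoose_succ_left (n - i) i
  have h₂ := gchoose_succ_left (n - i) (i - 1)
  have h₃ := gchoose_succ_left (n + k + 1 + i) (2 * i + 1)
  have h₄ := gchoose_succ_left (n + k + 1 + i) (2 * i)
  simp only [vsummand, vantidiff]
  rw [show n + 1 + (k + 1) + i = n + k + 1 + i + 1 by ring, show n + 1 - i = n - i + 1 by ring,
    show n + 1 + k + i = n + k + 1 + i by ring, show n + (k + 1) + i = n + k + 1 + i by ring,
    show n + 1 - (i + 1) = n - i by ring, show i + 1 - 1 = i by ring,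
    show n + k + 1 + (i + 1) = n + k + 1 + i + 1 by ring, show 2 * (i + 1) - 1 = 2 * i + 1 by ring,
    h₁, h₂, h₃, h₄, show 2 * i + 1 - 1 = 2 * i by ring]
  ring

theorem vsummand_add_vantidiff_eq_zero {n : ℤ} (hn : 0 ≤ n) (k : ℤ) :
    vsummand n (k + 1) (n + 1) + vantidiff n k (n + 2) = 0 := by
  have hzero : gchoose (-1) (n + 1) + gchoose (-1) n = 0 := by
    have := gchoose_succ_left (-1) (n + 1)
    rw [add_sub_cancel_right, neg_add_cancel, gchoose_eq_zero_of_lt le_rfl (by omega)] at this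
    exact this.symm
  simp only [vsummand, vantidiff]
  rw [show n - (n + 1) = -1 by ring, show n + 1 - (n + 2) = -1 by ring,
    show n + 1 - 1 = n by ring, show n + 2 - 1 = n + 1 by ring,
    show n + k + 1 + (n + 2) = n + (k + 1) + (n + 1) + 1 by ring,
    show 2 * (n + 2) - 1 = 2 * (n + 1) + 1 by ring, gchoose_succ_left,
    show 2 * (n + 1) + 1 - 1 = 2 * (n + 1) by ring]
  linear_combination gchoose (n + (k + 1) + (n + 1)) (2 * (n + 1)) * hzero

theorem vsummand_eq_vantidiff {n k : ℤ} (h : -1 ≤ n + k) :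
    vsummand (n + 1) (k + 1) (n + k + 2) = vantidiff n k (n + k + 2) := by
  simp only [vsummand, vantidiff]
  rw [show n + 1 + (k + 1) + (n + k + 2) = 2 * (n + k + 2) by ring,
    show n + k + 1 + (n + k + 2) = 2 * (n + k + 2) - 1 by ring,
    gchoose_eq_zero_of_lt (m := 2 * (n + k + 2)) (by omega) (by omega), gchoose_self (by omega),
    gchoose_self (by omega)]
  ring

theorem stmt_8 (n k : ℤ) (hn : 0 ≤ n) (hk : 1 ≤ k) :
    vseq (k + 1) (n + 1) = vseq k (n + 1) - vseq (k + 1) n := by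
  have hn₂ : n + 1 + 1 = n + 2 := by ring
  have hv₁ : vseq (k + 1) (n + 1) = ∑ i ∈ Icc (n + 2) (n + k + 1), vsummand (n + 1) (k + 1) i
      + vsummand (n + 1) (k + 1) (n + k + 2) := by
    rw [vseq_eq_sum_vsummand, hn₂, show n + 1 + (k + 1) = n + k + 1 + 1 by ring,
      ← insert_Icc_right_eq_Icc_add_one (by omega), sum_insert (by simp), add_comm,
      show n + k + 1 + 1 = n + k + 2 by ring]
  have hv₂ : vseq k (n + 1) = ∑ i ∈ Icc (n + 2) (n + k + 1), vsummand (n + 1) k i := by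
    rw [vseq_eq_sum_vsummand, hn₂, show n + 1 + k = n + k + 1 by ring]
  have hv₃ : vseq (k + 1) n
      = vsummand n (k + 1) (n + 1) + ∑ i ∈ Icc (n + 2) (n + k + 1), vsummand n (k + 1) i := by
    rw [vseq_eq_sum_vsummand, ← insert_Icc_add_one_left_eq_Icc (by omega), sum_insert (by simp),
      hn₂, show n + (k + 1) = n + k + 1 by ring]
  have htelescope : ∑ i ∈ Icc (n + 2) (n + k + 1),
      (vsummand (n + 1) (k + 1) i - vsummand (n + 1) k i + vsummand n (k + 1) i)
        = vantidiff n k (n + 2) - vantidiff n k (n + k + 2) := by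
    simp_rw [vsummand_add_vsummand_sub_vsummand]
    rw [Int.sum_Icc_sub' _ (by omega), show n + k + 1 + 1 = n + k + 2 by ring]
  rw [sum_add_distrib, sum_sub_distrib] at htelescope
  rw [hv₁, hv₂, hv₃]
  linear_combination htelescope + vsummand_add_vantidiff_eq_zero hn k
    + vsummand_eq_vantidiff (n := n) (k := k) (by omega)
end
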